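/- Let τ_n > 0 be a monotonically increasing sequence, let 𝔔 be a class of joint distributions Q of (X,Y) on ℝ^d × {0,1}, and for each n let N_n be a finite collection of subsets of ℝ^d such that: (i) for all Q ∈ 𝔔, every G ∈ ⋃_n N_n and the Bayes rule G*_Q are Q-measurable; (ii) there exist κ ≥ 1 and c₁ > 0 with d_{f_Q}(G, G*_Q) ≥ c₁ · d_Δ(G, G*_Q)^κ for all G ∈ ⋃_n N_n and all Q ∈ 𝔔; (iii) there exist N₀ ∈ ℕ and c₂ > 0 such that for all n ≥ N₀ and every Q ∈ 𝔔 there is G ∈ N_n with d_{f_Q}(G, G*_Q) ≤ c₂ τ_n^{-κ}; (iv) there exist c₃, ρ > 0 such that log|N_n| ≤ c₃ n^{ρ/(ρ+2κ−1)} for all n ≥ N₀. Then for every p ≥ 1, with τ̃_n := min{τ_n, n^{1/(ρ+2κ−1)}}, both limsup_{n→∞} sup_{Q∈𝔔} τ̃_n^{κp} · E[d_{f_Q}^p(Ĝ_n, G*_Q)] < ∞ and limsup_{n→∞} sup_{Q∈𝔔} τ̃_n^{p} · E[d_Δ^p(Ĝ_n, G*_Q)] < ∞ hold, where Ĝ_n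 is any empirical risk minimizer over N_n based on n i.i.d. observations from Q. -/

import Mathlib

open MeasureTheory

/-! ## Classification models -/

/-- A joint distribution `Q` of `(X,Y)` on `ℝ^d × {0,1}`, encoded by the marginal
distribution `μ` of `X` together with the regression function `f x = Q(Y = 1 ∣ X = x)`. -/
structure ClsModel (d : ℕ) where
  μ : Measure (Fin d → ℝ)
  prob : IsProbabilityMeasure μ
  f : (Fin d → ℝ) → ℝ
  f_meas : Measurable f
  f_nonneg : ∀ x, 0 ≤ f x
  f_le_one : ∀ x, f x ≤ 1

/-- The joint distribution of `(X,Y)` on `(ℝ^d) × Bool` determined by a model. -/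
noncomputable def ClsModel.joint {d : ℕ} (Q : ClsModel d) :
    Measure ((Fin d → ℝ) × Bool) :=
  Q.μ.bind fun x =>
    ENNReal.ofReal (Q.f x) • Measure.dirac (x, true)
      + ENNReal.ofReal (1 - Q.f x) • Measure.dirac (x, false)

/-- The distribution of `n` i.i.d. samples from `Q`. -/
noncomputable def ClsModel.samples {d : ℕ} (Q : ClsModel d) (n : ℕ) :
    Measure (Fin n → (Fin d → ℝ) × Bool) :=
  Measure.pi fun _ => Q.joint

/-- `d_{f_Q}(G₁,G₂) = ∫_{G₁ Δ G₂} |2 f_Q - 1| dQ_X`. -/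
noncomputable def ClsModel.dF {d : ℕ} (Q : ClsModel d) (G₁ G₂ : Set (Fin d → ℝ)) : ℝ :=
  ∫ x in symmDiff G₁ G₂, |2 * Q.f x - 1| ∂Q.μ

/-- `d_Δ(G₁,G₂) = Q_X(G₁ Δ G₂)`. -/
noncomputable def ClsModel.dDel {d : ℕ} (Q : ClsModel d) (G₁ G₂ : Set (Fin d → ℝ)) : ℝ :=
  (Q.μ (symmDiff G₁ G₂)).toReal

/-- The Bayes rule `G*_Q = {x ∣ f_Q(x) ≥ 1/2}`. -/
def ClsModel.bayes {d : ℕ} (Q : ClsModel d) : Set (Fin d → ℝ) := {x | 1/2 ≤ Q.f x}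

open Classical in
/-- The empirical misclassification error `R_n(G)` of a set `G` for data `ω`. -/
noncomputable def empRisk {d n : ℕ} (ω : Fin n → (Fin d → ℝ) × Bool)
    (G : Set (Fin d → ℝ)) : ℝ :=
  (n : ℝ)⁻¹ * ∑ i : Fin n, if ((ω i).1 ∈ G ↔ (ω i).2 = true) then 0 else 1

/-- `Ghat` is an empirical risk minimizer over the collection `𝒩`. -/
def isERM {d n : ℕ} (𝒩 : Set (Set (Fin d → ℝ)))
    (Ghat : (Fin n → (Fin d → ℝ) × Bool) → Set (Fin d → ℝ)) : Prop :=
  ∀ ω, Ghat ω ∈ 𝒩 ∧ ∀ G ∈ 𝒩, empRisk ω (Ghat ω) ≤ empRisk ω G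

/-- The expected `p`-th power of the distance between an estimator `Ghat` (a function of
`n` i.i.d. samples from `Q`) and the Bayes rule, for a distance `dist`. -/
noncomputable def clsRisk {d : ℕ} (Q : ClsModel d) (n : ℕ)
    (Ghat : (Fin n → (Fin d → ℝ) × Bool) → Set (Fin d → ℝ))
    (dist : ClsModel d → Set (Fin d → ℝ) → Set (Fin d → ℝ) → ℝ) (p : ℝ) : ℝ :=
  ∫ ω, dist Q (Ghat ω) Q.bayes ^ p ∂Q.samples n

/-! ## ReLU Neural networks -/

/-- A feedforward ReLU neural network with `L` hidden layers: `dims k` is the width of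
layer `k` (`dims 0` the input dimension, `dims (L+1)` the output dimension),
`W k` is the weight matrix mapping layer `k` to layer `k+1` (the paper's `W_{k+1}`),
and `b k` is the shift vector of hidden layer `k+1` (the paper's `b_{k+1}`).
Entries outside the relevant ranges are zero. -/
structure Net where
  L : ℕ
  dims : ℕ → ℕ
  W : ℕ → ℕ → ℕ → ℝ
  b : ℕ → ℕ → ℝ
  W_zero : ∀ k i j, L + 1 ≤ k ∨ dims (k+1) ≤ i ∨ dims k ≤ j → W k i j = 0
  b_zero : ∀ k j, L ≤ k ∨ dims (k+1) ≤ j → b k j = 0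

/-- The hidden state of layer `k` : `h_0 = x` (truncated to the input coordinates), and
`h_{k+1} = σ_{b_{k+1}}(W_{k+1} h_k)` (coordinatewise shifted ReLU). -/
noncomputable def Net.hidden (Φ : Net) : ℕ → (ℕ → ℝ) → ℕ → ℝ
  | 0, x, j => if j < Φ.dims 0 then x j else 0
  | k+1, x, j =>
    if j < Φ.dims (k+1) then
      max ((∑ i ∈ Finset.range (Φ.dims k), Φ.W k j i * Net.hidden Φ k x i) - Φ.b k j) 0
    else 0

/-- The output `W_{L+1} σ_{b_L} W_L ⋯ σ_{b_1} W_1 x` of the network. -/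
noncomputable def Net.out (Φ : Net) (x : ℕ → ℝ) : ℕ → ℝ :=
  fun j =>
    if j < Φ.dims (Φ.L + 1) then
      ∑ i ∈ Finset.range (Φ.dims Φ.L), Φ.W Φ.L j i * Net.hidden Φ Φ.L x i
    else 0

/-- The realization of the network as a map `ℝ^{din} → ℝ^{dout}`. -/
noncomputable def Net.realizeV (Φ : Net) (din dout : ℕ) (x : Fin din → ℝ) :
    Fin dout → ℝ :=
  fun j => Φ.out (fun i => if h : i < din then x ⟨i, h⟩ else 0) j

/-- The realization of a network with one-dimensional output, as a map `ℝ^{din} → ℝ`. -/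
noncomputable def Net.realize (Φ : Net) (din : ℕ) (x : Fin din → ℝ) : ℝ :=
  Φ.out (fun i => if h : i < din then x ⟨i, h⟩ else 0) 0

open Classical in
/-- The sparsity of a network: the total number of nonzero entries of the weight
matrices `W_1, …, W_{L+1}` and the shift vectors `b_1, …, b_L`. -/
noncomputable def Net.sparsity (Φ : Net) : ℕ :=
  (∑ k ∈ Finset.range (Φ.L + 1), ∑ i ∈ Finset.range (Φ.dims (k+1)),
      ((Finset.range (Φ.dims k)).filter fun j => Φ.W k i j ≠ 0).card)
    + ∑ k ∈ Finset.range Φ.L,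
        ((Finset.range (Φ.dims (k+1))).filter fun j => Φ.b k j ≠ 0).card

/-- The weight grid `W_c = {k 2^{-c} : k ∈ ℤ, |k| ≤ 2^c}`. -/
def Wgrid (c : ℕ) : Set ℝ :=
  {w | ∃ k : ℤ, |k| ≤ 2 ^ c ∧ w = (k : ℝ) * (2 : ℝ) ^ (-(c : ℤ))}

/-- All weights (matrix entries and shifts) of `Φ` belong to the grid `W_c`. -/
def Net.weightsIn (Φ : Net) (c : ℕ) : Prop :=
  (∀ k i j, Φ.W k i j ∈ Wgrid c) ∧ ∀ k j, Φ.b k j ∈ Wgrid c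

/-- The class `N_{L₀,s₀,c}` of subsets of `[0,1]^d` of the form `R(Φ)^{-1}(1)` for ReLU
networks with input dimension `d`, one-dimensional output, at most `L₀` layers,
sparsity at most `s₀` and weights in `W_c`. -/
def NNclass (d : ℕ) (L₀ s₀ : ℝ) (c : ℕ) : Set (Set (Fin d → ℝ)) :=
  {G | ∃ Φ : Net, Φ.dims 0 = d ∧ Φ.dims (Φ.L + 1) = 1 ∧
    (Φ.L : ℝ) ≤ L₀ ∧ (Φ.sparsity : ℝ) ≤ s₀ ∧ Φ.weightsIn c ∧
    G = {x : Fin d → ℝ | x ∈ Set.Icc 0 1 ∧ Φ.realize d x = 1}}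

/-- The class of subsets of `[0,1]^d` corresponding to arbitrary ReLU networks. -/
def allNNsets (d : ℕ) : Set (Set (Fin d → ℝ)) :=
  {G | ∃ Φ : Net, Φ.dims 0 = d ∧ Φ.dims (Φ.L + 1) = 1 ∧
    G = {x : Fin d → ℝ | x ∈ Set.Icc 0 1 ∧ Φ.realize d x = 1}}

/-! ## Hölder classes -/

/-- The unit cube `[0,1]^s`. -/
def cube (s : ℕ) : Set (Fin s → ℝ) := Set.Icc 0 1

/-- Partial derivative in coordinate direction `i` (within the cube). -/
noncomputable def pderiv' {s : ℕ} (i : Fin s) (f : (Fin s → ℝ) → ℝ) :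
    (Fin s → ℝ) → ℝ :=
  fun x => fderivWithin ℝ f (cube s) x (Pi.single i 1)

/-- The mixed partial derivative `∂^α f` for a multi-index `α`. -/
noncomputable def mderiv {s : ℕ} (α : Fin s → ℕ) (f : (Fin s → ℝ) → ℝ) :
    (Fin s → ℝ) → ℝ :=
  (List.finRange s).foldr (fun i g => (pderiv' i)^[α i] g) f

/-- `m = max {k ∈ ℕ ∣ k < β}` for `β > 0`. -/
noncomputable def holm (β : ℝ) : ℕ := ⌈β⌉₊ - 1

/-- The multi-indices `α` with `|α| ≤ m`. -/
def MIdxLe (s m : ℕ) : Finset (Fin s → ℕ) :=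
  (Fintype.piFinset fun _ : Fin s => Finset.range (m+1)).filter fun α => (∑ i, α i) ≤ m

/-- The multi-indices `α` with `|α| = m`. -/
def MIdxEq (s m : ℕ) : Finset (Fin s → ℕ) :=
  (Fintype.piFinset fun _ : Fin s => Finset.range (m+1)).filter fun α => (∑ i, α i) = m

/-- The Hölder ball `F_{β,B,s}`: continuous functions on `[0,1]^s` whose Hölder norm
`Σ_{|α|≤m} ‖∂^α f‖_∞ + Σ_{|α|=m} sup_{x≠y} |∂^α f(x)-∂^α f(y)|/‖x-y‖_∞^{β-m}`
is at most `B` (expressed via existence of per-term bounds summing to at most `B`). -/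
def HolderBall (β B : ℝ) (s : ℕ) : Set ((Fin s → ℝ) → ℝ) :=
  {f | ContinuousOn f (cube s) ∧
    ∃ sb : (Fin s → ℕ) → ℝ, ∃ hb : (Fin s → ℕ) → ℝ,
      (∀ α ∈ MIdxLe s (holm β), ∀ x ∈ cube s, |mderiv α f x| ≤ sb α) ∧
      (∀ α ∈ MIdxEq s (holm β), ∀ x ∈ cube s, ∀ y ∈ cube s, x ≠ y →
        |mderiv α f x - mderiv α f y| ≤ hb α * ‖x - y‖ ^ (β - holm β)) ∧
      (∑ α ∈ MIdxLe s (holm β), sb α) + ∑ α ∈ MIdxEq s (holm β), hb α ≤ B}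

/-- The one-dimensional Hölder ball `F_{β,B,1}` of functions on `[0,1]`. -/
def Holder1 (β B : ℝ) : Set (ℝ → ℝ) :=
  {g | ContinuousOn g (Set.Icc 0 1) ∧
    ∃ sb : ℕ → ℝ, ∃ hb : ℝ,
      (∀ k ≤ holm β, ∀ x ∈ Set.Icc (0:ℝ) 1,
        |iteratedDerivWithin k g (Set.Icc 0 1) x| ≤ sb k) ∧
      (∀ x ∈ Set.Icc (0:ℝ) 1, ∀ y ∈ Set.Icc (0:ℝ) 1, x ≠ y →
        |iteratedDerivWithin (holm β) g (Set.Icc 0 1) x -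
            iteratedDerivWithin (holm β) g (Set.Icc 0 1) y| ≤
          hb * |x - y| ^ (β - holm β)) ∧
      (∑ k ∈ Finset.range (holm β + 1), sb k) + hb ≤ B}

/-- The class `H_{β,B}` of Hölder functions whose derivatives vanish at `0` up to
order `m` (equivalently, for all integer orders `< β`). -/
def Hclass (β B : ℝ) : Set (ℝ → ℝ) :=
  {g | g ∈ Holder1 β B ∧ ∀ k ≤ holm β, iteratedDerivWithin k g (Set.Icc 0 1) 0 = 0}

/-! ## Boundary-fragment classes -/

/-- Remove the `j`-th coordinate: `x ↦ x_{-j}`. -/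
def rmCoord {d : ℕ} (j : Fin d) (x : Fin d → ℝ) : Fin (d-1) → ℝ :=
  fun i =>
    if h : (i : ℕ) < (j : ℕ) then x ⟨i, by have := i.isLt; omega⟩
    else x ⟨(i : ℕ) + 1, by have := i.isLt; omega⟩

/-- Membership of a set `H ⊆ [0,1]^d` in the class `K^F_{Q,β,B,ε₁,ε₂,r,d}`. -/
def memK (d : ℕ) (Q : ClsModel d) (F : Set ((Fin (d-1) → ℝ) → ℝ))
    (β B ε₁ ε₂ : ℝ) (r : ℕ) (H : Set (Fin d → ℝ)) : Prop :=
  ∃ u : ℕ, u ≤ r ∧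
  ∃ (jj : Fin u → Fin d) (ι : Fin u → ℝ) (γ : Fin u → (Fin (d-1) → ℝ) → ℝ)
    (a bb : Fin u → Fin d → ℝ),
    (∀ ν, ι ν = 1 ∨ ι ν = -1) ∧
    (∀ ν, γ ν ∈ F) ∧
    (∀ ν i, 0 ≤ a ν i ∧ a ν i < bb ν i ∧ bb ν i ≤ 1) ∧
    H = (⋃ ν, Set.Icc (a ν) (bb ν) ∩ {x | ι ν * x (jj ν) ≤ γ ν (rmCoord (jj ν) x)}) ∧
    (∀ ν₁ ν₂, ν₁ ≠ ν₂ →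
      volume (Set.Icc (a ν₁) (bb ν₁) ∩ Set.Icc (a ν₂) (bb ν₂)) = 0) ∧
    (∀ ν, ε₂ ≤ bb ν (jj ν) - a ν (jj ν)) ∧
    (0 < β → ∀ ν, ∀ x ∈ Set.Icc (a ν) (bb ν) ∩ frontier H,
      ∃ g ∈ Hclass β B, ∀ y : ℝ,
        max 0 (x (jj ν) - ε₁) ≤ y → y ≤ min 1 (x (jj ν) + ε₁) →
          |2 * Q.f (Function.update x (jj ν) y) - 1| ≤ g |y - x (jj ν)|)

/-! ## Composition classes -/

/-- Evaluate a chain of maps `g 0, g 1, …` up to stage `k`. -/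
noncomputable def chainEval (dd : ℕ → ℕ)
    (g : ∀ i : ℕ, (Fin (dd i) → ℝ) → (Fin (dd (i+1)) → ℝ)) :
    (k : ℕ) → (Fin (dd 0) → ℝ) → (Fin (dd k) → ℝ)
  | 0 => fun x => x
  | k+1 => fun x => g k (chainEval dd g k x)

/-- Membership in the composition class `G_{r,t,β,B,d}`: `γ = γ_r ∘ ⋯ ∘ γ_1`, each
component of `γ_i` being a Hölder function of `t_i` of the variables (here `0`-indexed:
`g i`, `t i`, `β i` and `dd i` correspond to the paper's `γ_{i+1}`, `t_{i+1}`,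
`β_{i+1}` and `d_{i+1}`). -/
def memComp (r : ℕ) (t : ℕ → ℕ) (dd : ℕ → ℕ) (β : ℕ → ℝ) (B : ℝ)
    (γ : (Fin (dd 0) → ℝ) → ℝ) : Prop :=
  ∃ g : ∀ i : ℕ, (Fin (dd i) → ℝ) → (Fin (dd (i+1)) → ℝ),
    (∀ i < r, ∀ j : Fin (dd (i+1)),
      ∃ γij : (Fin (t i) → ℝ) → ℝ, ∃ sel : Fin (t i) → Fin (dd i),
        γij ∈ HolderBall (β i) B (t i) ∧
        (i + 1 < r → ∀ z ∈ cube (t i), γij z ∈ Set.Icc (0:ℝ) 1) ∧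
        ∀ x, g i x j = γij fun k => x (sel k)) ∧
    ∀ x, ∀ j : Fin (dd r), γ x = chainEval dd g r x j

/-- `β_i^* = β_i ∏_{k=i+1}^r min{β_k,1}` (0-indexed). -/
noncomputable def betaStar (r : ℕ) (β : ℕ → ℝ) (i : ℕ) : ℝ :=
  β i * ∏ k ∈ Finset.Ico (i+1) r, min (β k) 1

/-! For a fixed `G`, the excess loss `ℓ(G₀) - ℓ(G)` of one observation has mean
`d_f(G₀, G*) - d_f(G, G*)` and second moment `d_Δ(G₀, G)`, and the noise condition bounds the
latter by a multiple of `d_f(G, G*)^{1/κ}`. A Chernoff bound with an optimised `λ` therefore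
shows that a set `G` with `d_f(G, G*) ≥ ε` beats an `ε/2`-good approximant `G₀` on `n`
observations with probability at most `exp(-c n ε^{2 - 1/κ})`. With `ε = K τ̃_n^{-κ}` this beats
the entropy `log |N_n| ≲ n^{ρ/(ρ+2κ-1)}` in a union bound, so outside an event of probability
`exp(-n^{ρ/(ρ+2κ-1)})` the empirical risk minimizer satisfies `d_f(Ĝ_n, G*) ≤ K τ̃_n^{-κ}`, and
then `d_Δ(Ĝ_n, G*) ≲ τ̃_n^{-1}` by the noise condition. Both distances are at most `1`, so the
moment bounds follow. -/

open Real Filter Topology ProbabilityTheory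

section ExponentialMoments

variable {α : Type*} [MeasurableSpace α] {μ : Measure α} [IsProbabilityMeasure μ] {V : α → ℝ}

theorem integrable_exp_mul_of_abs_le_one (hV : Measurable V) (hV1 : ∀ z, |V z| ≤ 1) (lam : ℝ) :
    Integrable (fun z => exp (lam * V z)) μ :=
  .of_bound (hV.const_mul lam).exp.aestronglyMeasurable (exp |lam|) (ae_of_all _ fun z => by
    rw [Real.norm_eq_abs, abs_of_pos (exp_pos _), exp_le_exp]
    calc lam * V z ≤ |lam * V z| := le_abs_self _
      _ = |lam| * |V z| := abs_mul _ _
      _ ≤ |lam| := mul_le_of_le_one_right (abs_nonneg _) (hV1 z))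

theorem integral_exp_mul_le_exp (hV : Measurable V) (hV1 : ∀ z, |V z| ≤ 1) {lam : ℝ}
    (h0 : 0 ≤ lam) (h1 : lam ≤ 1) :
    ∫ z, exp (lam * V z) ∂μ ≤ exp (lam * ∫ z, V z ∂μ + lam ^ 2 * ∫ z, V z ^ 2 ∂μ) := by
  have hlamV : ∀ z, |lam * V z| ≤ 1 := fun z => by
    rw [abs_mul, abs_of_nonneg h0]
    nlinarith [hV1 z, abs_nonneg (V z)]
  have hVint : Integrable V μ :=
    .of_bound hV.aestronglyMeasurable 1 (ae_of_all _ fun z => hV1 z)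
  have hV2int : Integrable (fun z => V z ^ 2) μ :=
    .of_bound (hV.pow_const 2).aestronglyMeasurable 1 (ae_of_all _ fun z => by
      rw [norm_pow, Real.norm_eq_abs]; exact pow_le_one₀ (abs_nonneg _) (hV1 z))
  have hquad : ∀ z, exp (lam * V z) ≤ 1 + lam * V z + lam ^ 2 * V z ^ 2 := fun z => by
    have := (abs_le.1 (abs_exp_sub_one_sub_id_le (hlamV z))).2
    linarith [mul_pow lam (V z) 2]
  have hlin : Integrable (fun z => 1 + lam * V z) μ :=
    (integrable_const 1).add (hVint.const_mul lam)
  calc ∫ z, exp (lam * V z) ∂μ ≤ ∫ z, (1 + lam * V z + lam ^ 2 * V z ^ 2) ∂μ :=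
        integral_mono (integrable_exp_mul_of_abs_le_one hV hV1 lam)
          (hlin.add (hV2int.const_mul _)) hquad
    _ = lam * ∫ z, V z ∂μ + lam ^ 2 * ∫ z, V z ^ 2 ∂μ + 1 := by
        rw [integral_add hlin (hV2int.const_mul _), integral_add (integrable_const 1)
          (hVint.const_mul lam), integral_const_mul, integral_const_mul, integral_const,
          probReal_univ, one_smul]
        ring
    _ ≤ _ := add_one_le_exp _

theorem measureReal_sum_nonneg_le_pow {ι : Type*} [Fintype ι] {lam : ℝ} (h0 : 0 ≤ lam)
    (hint : Integrable (fun z => exp (lam * V z)) μ) :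
    (Measure.pi fun _ : ι => μ).real {ω | 0 ≤ ∑ i, V (ω i)}
      ≤ (∫ z, exp (lam * V z) ∂μ) ^ Fintype.card ι := by
  have hprod : (fun ω : ι → α => exp (lam * ∑ i, V (ω i)))
      = fun ω => ∏ i, exp (lam * V (ω i)) := by
    ext ω; rw [Finset.mul_sum, exp_sum]
  have h := measure_ge_le_exp_mul_mgf (μ := Measure.pi fun _ : ι => μ)
    (X := fun ω => ∑ i, V (ω i)) 0 h0
    (by rw [hprod]; exact Integrable.fintype_prod (f := fun _ z => exp (lam * V z)) fun _ => hint)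
  rwa [mul_zero, exp_zero, one_mul, mgf, hprod,
    integral_fintype_prod_eq_pow (fun z => exp (lam * V z))] at h

end ExponentialMoments

section RiskBound

variable {Ω : Type*} [MeasurableSpace Ω] {μ : Measure Ω} [IsProbabilityMeasure μ] {g : Ω → ℝ}
  {B : Set Ω}

theorem integral_rpow_le_add_measureReal (hB : MeasurableSet B) (hg0 : ∀ ω, 0 ≤ g ω)
    (hg1 : ∀ ω, g ω ≤ 1) {c p : ℝ} (hc : 0 ≤ c) (hp : 0 ≤ p) (hgB : ∀ ω ∉ B, g ω ≤ c) :
    ∫ ω, g ω ^ p ∂μ ≤ c ^ p + μ.real B := by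
  by_cases hint : Integrable (fun ω => g ω ^ p) μ
  · have hpt : ∀ ω, g ω ^ p ≤ c ^ p + B.indicator 1 ω := fun ω => by
      by_cases hω : ω ∈ B
      · simpa [hω] using add_le_add (rpow_nonneg hc p) (rpow_le_one (hg0 ω) (hg1 ω) hp)
      · simpa [hω] using rpow_le_rpow (hg0 ω) (hgB ω hω) hp
    calc ∫ ω, g ω ^ p ∂μ ≤ ∫ ω, (c ^ p + B.indicator 1 ω) ∂μ :=
          integral_mono hint ((integrable_const _).add ((integrable_const 1).indicator hB)) hpt
      _ = c ^ p + μ.real B := by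
          rw [integral_add (integrable_const _) ((integrable_const 1).indicator hB),
            integral_indicator_one hB, integral_const, probReal_univ, one_smul]
  · rw [integral_undef hint]
    positivity

theorem rpow_mul_integral_rpow_le (hB : MeasurableSet B) (hg0 : ∀ ω, 0 ≤ g ω)
    (hg1 : ∀ ω, g ω ≤ 1) {t C s p : ℝ} (ht : 0 < t) (hC : 0 ≤ C) (hp : 0 ≤ p)
    (hgB : ∀ ω ∉ B, g ω ≤ C * t ^ (-s)) (hBt : t ^ (s * p) * μ.real B ≤ 1) :
    t ^ (s * p) * ∫ ω, g ω ^ p ∂μ ≤ C ^ p + 1 := by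
  have hscale : t ^ (s * p) * (C * t ^ (-s)) ^ p = C ^ p := by
    rw [mul_rpow hC (rpow_nonneg ht.le _), ← rpow_mul ht.le, mul_left_comm, ← rpow_add ht,
      neg_mul, add_neg_cancel, rpow_zero, mul_one]
  calc t ^ (s * p) * ∫ ω, g ω ^ p ∂μ ≤ t ^ (s * p) * ((C * t ^ (-s)) ^ p + μ.real B) := by
        gcongr
        exact integral_rpow_le_add_measureReal hB hg0 hg1 (by positivity) hp hgB
    _ ≤ C ^ p + 1 := by rw [mul_add, hscale]; linarith

end RiskBound

theorem exists_mul_add_sq_mul_le {a u w M : ℝ} (hu : 0 < u) (hM : 0 < M) (ha : a ≤ u / 2)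
    (hw : w ≤ M) :
    ∃ lam, 0 ≤ lam ∧ lam ≤ 1 ∧
      lam * (a - u) + lam ^ 2 * w ≤ -min (u ^ 2 / (16 * M)) (u / 4) := by
  by_cases hcase : u / (4 * M) ≤ 1
  · refine ⟨u / (4 * M), by positivity, hcase, ?_⟩
    calc u / (4 * M) * (a - u) + (u / (4 * M)) ^ 2 * w
        ≤ u / (4 * M) * (-(u / 2)) + (u / (4 * M)) ^ 2 * M := by
          gcongr
          linarith
      _ = -(u ^ 2 / (16 * M)) := by field_simp; ring
      _ ≤ _ := neg_le_neg (min_le_left _ _)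
  · refine ⟨1, zero_le_one, le_rfl, ?_⟩
    rw [not_le, one_lt_div (by positivity)] at hcase
    linarith [min_le_right (u ^ 2 / (16 * M)) (u / 4)]

-- `u²/(16M)` with `M = 2 (u/c₁)^{1/κ}` equals `c₁^{1/κ} u^{2-1/κ} / 32`; the `1/4` comes from
-- the case `λ = 1` of `exists_mul_add_sq_mul_le`.
noncomputable def deviationConst (c₁ κ : ℝ) : ℝ := min (c₁ ^ κ⁻¹ / 32) (1 / 4)

theorem deviationConst_pos {c₁ : ℝ} (hc₁ : 0 < c₁) (κ : ℝ) : 0 < deviationConst c₁ κ :=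
  lt_min (by positivity) (by norm_num)

theorem deviationConst_mul_rpow_le {c₁ κ ε u : ℝ} (hc₁ : 0 < c₁) (hκ : 1 ≤ κ) (hε : 0 < ε)
    (hεu : ε ≤ u) (hu1 : u ≤ 1) :
    deviationConst c₁ κ * ε ^ (2 - κ⁻¹)
      ≤ min (u ^ 2 / (16 * (2 * (u / c₁) ^ κ⁻¹))) (u / 4) := by
  have hu : 0 < u := hε.trans_le hεu
  have hq : 1 ≤ 2 - κ⁻¹ := by linarith [inv_le_one_of_one_le₀ hκ]
  have hεq : ε ^ (2 - κ⁻¹) ≤ u ^ (2 - κ⁻¹) := rpow_le_rpow hε.le hεu (by linarith)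
  refine le_min ?_ ?_
  · have hsplit : u ^ 2 / (16 * (2 * (u / c₁) ^ κ⁻¹)) = c₁ ^ κ⁻¹ / 32 * u ^ (2 - κ⁻¹) := by
      rw [div_rpow hu.le hc₁.le, rpow_sub hu, rpow_two]
      field_simp
      ring
    rw [hsplit]
    exact mul_le_mul (min_le_left _ _) hεq (by positivity) (by positivity)
  · have huq : u ^ (2 - κ⁻¹) ≤ u := by
      simpa using rpow_le_rpow_of_exponent_ge hu hu1 hq
    calc deviationConst c₁ κ * ε ^ (2 - κ⁻¹) ≤ 1 / 4 * u :=
          mul_le_mul (min_le_right _ _) (hεq.trans huq) (by positivity) (by norm_num)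
      _ = u / 4 := by ring

theorem le_div_rpow_inv_of_mul_rpow_le {c κ x y : ℝ} (hc : 0 < c) (hκ : 0 < κ) (hx : 0 ≤ x)
    (h : c * x ^ κ ≤ y) : x ≤ (y / c) ^ κ⁻¹ :=
  (le_rpow_inv_iff_of_pos hx (div_nonneg ((by positivity : 0 ≤ c * x ^ κ).trans h) hc.le)
    hκ).2 ((le_div_iff₀' hc).2 h)

theorem le_mul_rpow_neg_one_of_mul_rpow_le {c κ x K t : ℝ} (hc : 0 < c) (hκ : 0 < κ)
    (hx : 0 ≤ x) (hK : 0 ≤ K) (ht : 0 < t) (h : c * x ^ κ ≤ K * t ^ (-κ)) :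
    x ≤ (K / c) ^ κ⁻¹ * t ^ (-1 : ℝ) := by
  calc x ≤ (K * t ^ (-κ) / c) ^ κ⁻¹ := le_div_rpow_inv_of_mul_rpow_le hc hκ hx h
    _ = (K / c) ^ κ⁻¹ * t ^ (-1 : ℝ) := by
        rw [mul_div_right_comm, mul_rpow (by positivity) (by positivity), ← rpow_mul ht.le,
          neg_mul, mul_inv_cancel₀ hκ.ne']

theorem tendsto_rpow_mul_exp_neg_rpow_atTop (s : ℝ) {D : ℝ} (hD : 0 < D) :
    Tendsto (fun x : ℝ => x ^ s * exp (-x ^ D)) atTop (𝓝 0) := by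
  refine ((tendsto_rpow_mul_exp_neg_mul_atTop_nhds_zero (s / D) 1 one_pos).comp
    (tendsto_rpow_atTop hD)).congr' ?_
  filter_upwards [eventually_ge_atTop 0] with x hx
  rw [Function.comp_apply, ← rpow_mul hx, mul_div_cancel₀ s hD.ne', neg_one_mul]

theorem eventually_min_rpow_mul_exp_neg_rpow_le_one {τ : ℕ → ℝ} (hτ : ∀ n, 0 < τ n)
    (α : ℝ) {s D : ℝ} (hs : 0 ≤ s) (hD : 0 < D) :
    ∀ᶠ n : ℕ in atTop, min (τ n) ((n : ℝ) ^ α) ^ s * exp (-(n : ℝ) ^ D) ≤ 1 := by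
  filter_upwards [((tendsto_rpow_mul_exp_neg_rpow_atTop (α * s) hD).comp
    tendsto_natCast_atTop_atTop).eventually_le_const one_pos] with n hn
  calc min (τ n) ((n : ℝ) ^ α) ^ s * exp (-(n : ℝ) ^ D)
      ≤ ((n : ℝ) ^ α) ^ s * exp (-(n : ℝ) ^ D) := by
        gcongr
        · exact le_min (hτ n).le (by positivity)
        · exact min_le_right _ _
    _ ≤ 1 := by rwa [← rpow_mul n.cast_nonneg]

-- This is where the rate `n^{1/(ρ+2κ-1)}` comes from: at `t = n^{1/(ρ+2κ-1)}` the deviation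
-- exponent `n ε^{2-1/κ}`, `ε = t^{-κ}`, equals the entropy exponent `n^{ρ/(ρ+2κ-1)}`.
theorem rpow_div_le_mul_rpow_neg {n t κ ρ : ℝ} (hn : 0 < n) (ht : 0 < t) (hκ : 1 ≤ κ)
    (hρ : 0 < ρ) (htn : t ≤ n ^ (1 / (ρ + 2 * κ - 1))) :
    n ^ (ρ / (ρ + 2 * κ - 1)) ≤ n * (t ^ (-κ)) ^ (2 - κ⁻¹) := by
  have hr : 0 < ρ + 2 * κ - 1 := by linarith
  have hκ0 : κ ≠ 0 := by positivity
  calc n ^ (ρ / (ρ + 2 * κ - 1)) = n ^ (1 + 1 / (ρ + 2 * κ - 1) * (-(2 * κ - 1))) := by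
        congr 1; field_simp; ring
    _ = n * (n ^ (1 / (ρ + 2 * κ - 1))) ^ (-(2 * κ - 1)) := by
        rw [rpow_add hn, rpow_one, rpow_mul hn.le]
    _ ≤ n * t ^ (-(2 * κ - 1)) :=
        mul_le_mul_of_nonneg_left (rpow_le_rpow_of_nonpos ht htn (by linarith)) hn.le
    _ = n * (t ^ (-κ)) ^ (2 - κ⁻¹) := by
        rw [← rpow_mul ht.le]
        congr 2
        field_simp

theorem mul_exp_neg_le_exp_neg_rpow {x n t κ ρ c₃ c₄ K : ℝ} (hn : 0 < n)
    (ht : 0 < t) (hκ : 1 ≤ κ) (hρ : 0 < ρ) (htn : t ≤ n ^ (1 / (ρ + 2 * κ - 1)))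
    (hlog : log x ≤ c₃ * n ^ (ρ / (ρ + 2 * κ - 1))) (hc₄ : 0 ≤ c₄) (hK : 0 ≤ K)
    (hKq : c₃ + 1 ≤ c₄ * K ^ (2 - κ⁻¹)) :
    x * exp (-(n * (c₄ * (K * t ^ (-κ)) ^ (2 - κ⁻¹)))) ≤ exp (-n ^ (ρ / (ρ + 2 * κ - 1))) := by
  have hrate := rpow_div_le_mul_rpow_neg hn ht hκ hρ htn
  have hc₄K : 0 ≤ c₄ * K ^ (2 - κ⁻¹) := by positivity
  have hexp : n * (c₄ * (K * t ^ (-κ)) ^ (2 - κ⁻¹))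
      = c₄ * K ^ (2 - κ⁻¹) * (n * (t ^ (-κ)) ^ (2 - κ⁻¹)) := by
    rw [mul_rpow hK (by positivity)]; ring
  calc x * exp (-(n * (c₄ * (K * t ^ (-κ)) ^ (2 - κ⁻¹))))
      ≤ exp (c₃ * n ^ (ρ / (ρ + 2 * κ - 1))) *
          exp (-(c₄ * K ^ (2 - κ⁻¹) * (n * (t ^ (-κ)) ^ (2 - κ⁻¹)))) := by
        rw [hexp]
        gcongr
        exact (le_exp_log x).trans (exp_le_exp.2 hlog)
    _ ≤ exp (-n ^ (ρ / (ρ + 2 * κ - 1))) := by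
        rw [← exp_add, exp_le_exp]
        nlinarith [mul_le_mul_of_nonneg_left hrate hc₄K, rpow_nonneg hn.le (ρ / (ρ + 2 * κ - 1))]

-- Elaborated under `open Classical` like `empRisk`, so that `empRisk ω G` unfolds to
-- `n⁻¹ * ∑ i, loss G (ω i)`.
open Classical in
noncomputable def loss {X : Type*} (G : Set X) (z : X × Bool) : ℝ :=
  if z.1 ∈ G ↔ z.2 = true then 0 else 1

section Loss

variable {X : Type*} {G G' : Set X}

theorem abs_loss_sub_loss_le_one (z : X × Bool) : |loss G z - loss G' z| ≤ 1 := by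
  unfold loss; split_ifs <;> norm_num

theorem loss_sub_loss_sq (z : X × Bool) :
    (loss G z - loss G' z) ^ 2 = (symmDiff G G').indicator 1 z.1 := by
  obtain ⟨x, _ | _⟩ := z <;> by_cases hx : x ∈ G <;> by_cases hx' : x ∈ G' <;>
    simp [loss, Set.indicator, Set.mem_symmDiff, hx, hx']

theorem measurable_loss [MeasurableSpace X] (hG : MeasurableSet G) : Measurable (loss G) := by
  refine Measurable.ite ?_ measurable_const measurable_const
  have : {z : X × Bool | z.1 ∈ G ↔ z.2 = true} = G ×ˢ {true} ∪ Gᶜ ×ˢ {false} := by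
    ext ⟨x, _ | _⟩ <;> simp
  rw [this]
  exact (hG.prod (measurableSet_singleton _)).union (hG.compl.prod (measurableSet_singleton _))

theorem sum_loss_le_of_empRisk_le {d n : ℕ} {ω : Fin n → (Fin d → ℝ) × Bool}
    {G G' : Set (Fin d → ℝ)} (h : empRisk ω G ≤ empRisk ω G') :
    ∑ i, loss G (ω i) ≤ ∑ i, loss G' (ω i) := by
  rcases n.eq_zero_or_pos with rfl | hn
  · simp
  · exact le_of_mul_le_mul_left h (by positivity)

end Loss

namespace ClsModel

variable {d : ℕ} (Q : ClsModel d) {G G₀ : Set (Fin d → ℝ)}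

instance : IsProbabilityMeasure Q.μ := Q.prob

theorem measurable_labelMeasure :
    Measurable fun x => ENNReal.ofReal (Q.f x) • Measure.dirac (x, true)
      + ENNReal.ofReal (1 - Q.f x) • Measure.dirac (x, false) := by
  refine Measure.measurable_of_measurable_coe _ fun s hs => ?_
  simp only [Measure.coe_add, Pi.add_apply, Measure.smul_apply, smul_eq_mul,
    Measure.dirac_apply' _ hs]
  have hf := Q.f_meas
  fun_prop (disch := exact hs)

theorem lintegral_joint {g : (Fin d → ℝ) × Bool → ENNReal} (hg : Measurable g) :
    ∫⁻ z, g z ∂Q.joint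
      = ∫⁻ x, ENNReal.ofReal (Q.f x) * g (x, true)
          + ENNReal.ofReal (1 - Q.f x) * g (x, false) ∂Q.μ := by
  rw [joint, Measure.lintegral_bind Q.measurable_labelMeasure.aemeasurable hg.aemeasurable]
  congr 1 with x
  rw [lintegral_add_measure, lintegral_smul_measure, lintegral_smul_measure,
    lintegral_dirac' _ hg, lintegral_dirac' _ hg, smul_eq_mul, smul_eq_mul]

instance : IsProbabilityMeasure Q.joint := by
  constructor
  have h := Q.lintegral_joint (g := fun _ => 1) measurable_const
  simp only [lintegral_const, one_mul, mul_one] at h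
  rw [h]
  simp_rw [← ENNReal.ofReal_add (Q.f_nonneg _) (sub_nonneg.2 (Q.f_le_one _)), add_sub_cancel,
    ENNReal.ofReal_one, lintegral_const, measure_univ, mul_one]

instance (n : ℕ) : IsProbabilityMeasure (Q.samples n) := by
  rw [samples]; infer_instance

theorem integral_joint {h : (Fin d → ℝ) × Bool → ℝ} (hm : Measurable h) (h0 : ∀ z, 0 ≤ h z) :
    ∫ z, h z ∂Q.joint = ∫ x, (Q.f x * h (x, true) + (1 - Q.f x) * h (x, false)) ∂Q.μ := by
  have hf0 := Q.f_nonneg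
  have hf1 : ∀ x, 0 ≤ 1 - Q.f x := fun x => sub_nonneg.2 (Q.f_le_one x)
  have hf := Q.f_meas
  rw [integral_eq_lintegral_of_nonneg_ae (ae_of_all _ h0) hm.aestronglyMeasurable,
    integral_eq_lintegral_of_nonneg_ae
      (ae_of_all _ fun x => add_nonneg (mul_nonneg (hf0 x) (h0 _)) (mul_nonneg (hf1 x) (h0 _)))
      (by fun_prop), Q.lintegral_joint (by fun_prop)]
  congr 1
  refine lintegral_congr fun x => ?_
  rw [ENNReal.ofReal_add (mul_nonneg (hf0 x) (h0 _)) (mul_nonneg (hf1 x) (h0 _)),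
    ENNReal.ofReal_mul (hf0 x), ENNReal.ofReal_mul (hf1 x)]

theorem measurableSet_bayes : MeasurableSet Q.bayes :=
  measurableSet_le measurable_const Q.f_meas

theorem abs_two_mul_f_sub_one_le (x : Fin d → ℝ) : |2 * Q.f x - 1| ≤ 1 :=
  abs_le.2 ⟨by linarith [Q.f_nonneg x], by linarith [Q.f_le_one x]⟩

theorem dF_nonneg (G₁ G₂ : Set (Fin d → ℝ)) : 0 ≤ Q.dF G₁ G₂ :=
  integral_nonneg fun _ => abs_nonneg _

theorem dDel_nonneg (G₁ G₂ : Set (Fin d → ℝ)) : 0 ≤ Q.dDel G₁ G₂ := ENNReal.toReal_nonneg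

theorem dDel_le_one (G₁ G₂ : Set (Fin d → ℝ)) : Q.dDel G₁ G₂ ≤ 1 := measureReal_le_one

theorem dDel_comm (G₁ G₂ : Set (Fin d → ℝ)) : Q.dDel G₁ G₂ = Q.dDel G₂ G₁ := by
  rw [dDel, dDel, symmDiff_comm]

theorem dDel_triangle (G₁ G₂ G₃ : Set (Fin d → ℝ)) :
    Q.dDel G₁ G₃ ≤ Q.dDel G₁ G₂ + Q.dDel G₂ G₃ :=
  measureReal_symmDiff_le G₃

theorem dF_le_dDel (G₁ G₂ : Set (Fin d → ℝ)) : Q.dF G₁ G₂ ≤ Q.dDel G₁ G₂ := by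
  have h := norm_setIntegral_le_of_norm_le_const (measure_lt_top Q.μ (symmDiff G₁ G₂))
    (f := fun x => |2 * Q.f x - 1|) fun x _ => by simpa using Q.abs_two_mul_f_sub_one_le x
  rw [one_mul, Real.norm_eq_abs] at h
  exact (le_abs_self _).trans h

theorem dF_le_one (G₁ G₂ : Set (Fin d → ℝ)) : Q.dF G₁ G₂ ≤ 1 :=
  (Q.dF_le_dDel G₁ G₂).trans (Q.dDel_le_one G₁ G₂)

/-- The probability of misclassifying a point `x` by `G`, given `X = x`. -/
noncomputable def condRisk (G : Set (Fin d → ℝ)) (x : Fin d → ℝ) : ℝ :=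
  Q.f x * loss G (x, true) + (1 - Q.f x) * loss G (x, false)

theorem condRisk_sub_condRisk_bayes (G : Set (Fin d → ℝ)) (x : Fin d → ℝ) :
    Q.condRisk G x - Q.condRisk Q.bayes x
      = (symmDiff G Q.bayes).indicator (fun x => |2 * Q.f x - 1|) x := by
  by_cases hx : x ∈ G <;> by_cases hB : 1 / 2 ≤ Q.f x
  all_goals
    simp only [condRisk, loss, bayes, Set.indicator, Set.mem_symmDiff, Set.mem_ofPred_eq, hx, hB]
    norm_num
  · rw [abs_of_neg (by linarith)]; ring
  · rw [abs_of_nonneg (by linarith)]; ring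

theorem integrable_loss (hG : MeasurableSet G) : Integrable (loss G) Q.joint :=
  .of_bound (measurable_loss hG).aestronglyMeasurable 1 (ae_of_all _ fun z => by
    unfold loss; split_ifs <;> norm_num)

theorem integrable_condRisk (hG : MeasurableSet G) : Integrable (Q.condRisk G) Q.μ := by
  have hl := measurable_loss hG
  have hf := Q.f_meas
  refine .of_bound (by unfold condRisk; fun_prop) 1 (ae_of_all _ fun x => ?_)
  have := Q.f_nonneg x
  have := Q.f_le_one x
  rw [Real.norm_eq_abs, abs_le]
  unfold condRisk loss
  constructor <;> split_ifs <;> nlinarith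

theorem integral_loss (hG : MeasurableSet G) :
    ∫ z, loss G z ∂Q.joint = ∫ x, Q.condRisk G x ∂Q.μ :=
  Q.integral_joint (measurable_loss hG) fun z => by unfold loss; split_ifs <;> norm_num

theorem integral_loss_sub_integral_loss_bayes (hG : MeasurableSet G) :
    ∫ z, loss G z ∂Q.joint - ∫ z, loss Q.bayes z ∂Q.joint = Q.dF G Q.bayes := by
  rw [Q.integral_loss hG, Q.integral_loss Q.measurableSet_bayes,
    ← integral_sub (Q.integrable_condRisk hG) (Q.integrable_condRisk Q.measurableSet_bayes)]
  simp_rw [Q.condRisk_sub_condRisk_bayes]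
  exact integral_indicator (hG.symmDiff Q.measurableSet_bayes)

theorem integral_loss_sub_loss_sq (hG : MeasurableSet G) (hG₀ : MeasurableSet G₀) :
    ∫ z, (loss G₀ z - loss G z) ^ 2 ∂Q.joint = Q.dDel G₀ G := by
  rw [Q.integral_joint (h := fun z => (loss G₀ z - loss G z) ^ 2)
    (((measurable_loss hG₀).sub (measurable_loss hG)).pow_const 2) fun z => sq_nonneg _]
  simp_rw [loss_sub_loss_sq, ← add_mul, add_sub_cancel, one_mul]
  exact integral_indicator_one (hG₀.symmDiff hG)

theorem integral_exp_excessLoss_le (hG : MeasurableSet G) (hG₀ : MeasurableSet G₀) {lam : ℝ}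
    (h0 : 0 ≤ lam) (h1 : lam ≤ 1) :
    ∫ z, exp (lam * (loss G₀ z - loss G z)) ∂Q.joint
      ≤ exp (lam * (Q.dF G₀ Q.bayes - Q.dF G Q.bayes) + lam ^ 2 * Q.dDel G₀ G) := by
  have hmean : ∫ z, (loss G₀ z - loss G z) ∂Q.joint = Q.dF G₀ Q.bayes - Q.dF G Q.bayes := by
    rw [integral_sub (Q.integrable_loss hG₀) (Q.integrable_loss hG),
      ← Q.integral_loss_sub_integral_loss_bayes hG₀, ← Q.integral_loss_sub_integral_loss_bayes hG]
    ring
  have h := integral_exp_mul_le_exp (μ := Q.joint) (V := fun z => loss G₀ z - loss G z)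
    ((measurable_loss hG₀).sub (measurable_loss hG)) abs_loss_sub_loss_le_one h0 h1
  rwa [hmean, Q.integral_loss_sub_loss_sq hG hG₀] at h

theorem measureReal_sum_excessLoss_nonneg_le (n : ℕ) (hG : MeasurableSet G)
    (hG₀ : MeasurableSet G₀) {lam : ℝ} (h0 : 0 ≤ lam) (h1 : lam ≤ 1) :
    (Q.samples n).real {ω | 0 ≤ ∑ i, (loss G₀ (ω i) - loss G (ω i))}
      ≤ exp (lam * (Q.dF G₀ Q.bayes - Q.dF G Q.bayes) + lam ^ 2 * Q.dDel G₀ G) ^ n := by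
  have h := measureReal_sum_nonneg_le_pow (ι := Fin n) h0 (integrable_exp_mul_of_abs_le_one
    (μ := Q.joint) (V := fun z => loss G₀ z - loss G z)
    ((measurable_loss hG₀).sub (measurable_loss hG)) abs_loss_sub_loss_le_one lam)
  rw [Fintype.card_fin] at h
  exact h.trans (pow_le_pow_left₀ (integral_nonneg fun _ => (exp_pos _).le)
    (Q.integral_exp_excessLoss_le hG hG₀ h0 h1) n)

theorem measureReal_sum_excessLoss_nonneg_le_exp (n : ℕ) (hG : MeasurableSet G)
    (hG₀ : MeasurableSet G₀) {c₁ κ ε : ℝ} (hc₁ : 0 < c₁) (hκ : 1 ≤ κ) (hε : 0 < ε)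
    (hnG : c₁ * Q.dDel G Q.bayes ^ κ ≤ Q.dF G Q.bayes)
    (hnG₀ : c₁ * Q.dDel G₀ Q.bayes ^ κ ≤ Q.dF G₀ Q.bayes)
    (hGε : ε ≤ Q.dF G Q.bayes) (hG₀ε : Q.dF G₀ Q.bayes ≤ ε / 2) :
    (Q.samples n).real {ω | 0 ≤ ∑ i, (loss G₀ (ω i) - loss G (ω i))}
      ≤ exp (-(n * (deviationConst c₁ κ * ε ^ (2 - κ⁻¹)))) := by
  have hκ0 : 0 < κ := by linarith
  set u := Q.dF G Q.bayes
  have hu : 0 < u := hε.trans_le hGε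
  have hw : Q.dDel G₀ G ≤ 2 * (u / c₁) ^ κ⁻¹ := by
    have hG₀u : (Q.dF G₀ Q.bayes / c₁) ^ κ⁻¹ ≤ (u / c₁) ^ κ⁻¹ := by
      gcongr
      · exact div_nonneg (Q.dF_nonneg _ _) hc₁.le
      · linarith
    calc Q.dDel G₀ G ≤ Q.dDel G₀ Q.bayes + Q.dDel G Q.bayes := by
          rw [Q.dDel_comm G]; exact Q.dDel_triangle _ _ _
      _ ≤ (Q.dF G₀ Q.bayes / c₁) ^ κ⁻¹ + (u / c₁) ^ κ⁻¹ :=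
          add_le_add (le_div_rpow_inv_of_mul_rpow_le hc₁ hκ0 (Q.dDel_nonneg _ _) hnG₀)
            (le_div_rpow_inv_of_mul_rpow_le hc₁ hκ0 (Q.dDel_nonneg _ _) hnG)
      _ ≤ 2 * (u / c₁) ^ κ⁻¹ := by linarith
  obtain ⟨lam, h0, h1, hlam⟩ :=
    exists_mul_add_sq_mul_le hu (by positivity) (by linarith : Q.dF G₀ Q.bayes ≤ u / 2) hw
  calc (Q.samples n).real {ω | 0 ≤ ∑ i, (loss G₀ (ω i) - loss G (ω i))}
      ≤ exp (lam * (Q.dF G₀ Q.bayes - u) + lam ^ 2 * Q.dDel G₀ G) ^ n :=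
        Q.measureReal_sum_excessLoss_nonneg_le n hG hG₀ h0 h1
    _ ≤ exp (-(deviationConst c₁ κ * ε ^ (2 - κ⁻¹))) ^ n := by
        gcongr
        exact hlam.trans (neg_le_neg (deviationConst_mul_rpow_le hc₁ hκ hε hGε
          (Q.dF_le_one _ _)))
    _ = exp (-(n * (deviationConst c₁ κ * ε ^ (2 - κ⁻¹)))) := by
        rw [← exp_nat_mul]; ring_nf

theorem exists_badEvent_of_isERM {n : ℕ} {𝒩 : Finset (Set (Fin d → ℝ))}
    (hmeas : ∀ G ∈ 𝒩, MeasurableSet G) {c₁ κ ε : ℝ} (hc₁ : 0 < c₁) (hκ : 1 ≤ κ) (hε : 0 < ε)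
    (hnoise : ∀ G ∈ 𝒩, c₁ * Q.dDel G Q.bayes ^ κ ≤ Q.dF G Q.bayes)
    (hG₀ : G₀ ∈ 𝒩) (hG₀ε : Q.dF G₀ Q.bayes ≤ ε / 2)
    {Ghat : (Fin n → (Fin d → ℝ) × Bool) → Set (Fin d → ℝ)}
    (hERM : isERM (↑𝒩 : Set (Set (Fin d → ℝ))) Ghat) :
    ∃ B, MeasurableSet B ∧
      (Q.samples n).real B ≤ 𝒩.card * exp (-(n * (deviationConst c₁ κ * ε ^ (2 - κ⁻¹)))) ∧
      ∀ ω ∉ B, Q.dF (Ghat ω) Q.bayes ≤ ε := by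
  classical
  set 𝒮 := 𝒩.filter fun G => ε < Q.dF G Q.bayes
  refine ⟨⋃ G ∈ 𝒮, {ω | 0 ≤ ∑ i, (loss G₀ (ω i) - loss G (ω i))}, ?_, ?_, ?_⟩
  · refine 𝒮.measurableSet_biUnion fun G hG => measurableSet_le measurable_const ?_
    have := measurable_loss (hmeas G₀ hG₀)
    have := measurable_loss (hmeas G (Finset.mem_filter.1 hG).1)
    fun_prop
  · calc _ ≤ ∑ G ∈ 𝒮, (Q.samples n).real {ω | 0 ≤ ∑ i, (loss G₀ (ω i) - loss G (ω i))} :=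
          measureReal_biUnion_finset_le _ _
      _ ≤ 𝒮.card * exp (-(n * (deviationConst c₁ κ * ε ^ (2 - κ⁻¹)))) := by
          rw [← nsmul_eq_mul]
          refine Finset.sum_le_card_nsmul _ _ _ fun G hG => ?_
          obtain ⟨hG𝒩, hGε⟩ := Finset.mem_filter.1 hG
          exact Q.measureReal_sum_excessLoss_nonneg_le_exp n (hmeas G hG𝒩) (hmeas G₀ hG₀) hc₁
            hκ hε (hnoise G hG𝒩) (hnoise G₀ hG₀) hGε.le hG₀ε
      _ ≤ _ := by gcongr; exact Finset.filter_subset _ _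
  · intro ω hω
    by_contra! hfar
    refine hω (Set.mem_biUnion (Finset.mem_filter.2 ⟨(hERM ω).1, hfar⟩) ?_)
    simpa [Finset.sum_sub_distrib] using sum_loss_le_of_empRisk_le ((hERM ω).2 G₀ hG₀)

end ClsModel

theorem eventually_exists_badEvent {d : ℕ} {τ : ℕ → ℝ} (hτpos : ∀ n, 0 < τ n)
    {𝔔 : Set (ClsModel d)} {N : ℕ → Finset (Set (Fin d → ℝ))}
    (hmeas : ∀ Q ∈ 𝔔, ∀ n, ∀ G ∈ N n, MeasurableSet G) {κ c₁ : ℝ} (hκ : 1 ≤ κ) (hc₁ : 0 < c₁)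
    (hnoise : ∀ Q ∈ 𝔔, ∀ n, ∀ G ∈ N n, c₁ * Q.dDel G Q.bayes ^ κ ≤ Q.dF G Q.bayes)
    {N₀ : ℕ} {c₂ : ℝ} (hc₂ : 0 < c₂)
    (happrox : ∀ n ≥ N₀, ∀ Q ∈ 𝔔, ∃ G ∈ N n, Q.dF G Q.bayes ≤ c₂ * τ n ^ (-κ))
    {c₃ ρ : ℝ} (hc₃ : 0 < c₃) (hρ : 0 < ρ)
    (hent : ∀ n ≥ N₀, log ((N n).card) ≤ c₃ * (n : ℝ) ^ (ρ / (ρ + 2 * κ - 1))) :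
    ∃ K > 0, ∀ᶠ n in atTop, ∀ Q ∈ 𝔔,
      ∀ Ghat : (Fin n → (Fin d → ℝ) × Bool) → Set (Fin d → ℝ),
        isERM (↑(N n) : Set (Set (Fin d → ℝ))) Ghat → ∃ B, MeasurableSet B ∧
          (Q.samples n).real B ≤ exp (-(n : ℝ) ^ (ρ / (ρ + 2 * κ - 1))) ∧
          ∀ ω ∉ B, Q.dF (Ghat ω) Q.bayes
            ≤ K * min (τ n) ((n : ℝ) ^ (1 / (ρ + 2 * κ - 1))) ^ (-κ) := by
  have hc₄ := deviationConst_pos hc₁ κ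
  have hq : 0 < 2 - κ⁻¹ := by linarith [inv_le_one_of_one_le₀ hκ]
  -- `K ≥ 2 c₂` makes the approximant `ε/2`-good for `ε = K τ̃_n^{-κ}`, and the second bound
  -- makes the deviation exponent beat the entropy.
  set K := max (2 * c₂) (((c₃ + 1) / deviationConst c₁ κ) ^ (2 - κ⁻¹)⁻¹)
  have hK₂ : 2 * c₂ ≤ K := le_max_left _ _
  have hK : 0 < K := by linarith
  have hKq : c₃ + 1 ≤ deviationConst c₁ κ * K ^ (2 - κ⁻¹) := by
    rw [← div_le_iff₀' hc₄]
    calc (c₃ + 1) / deviationConst c₁ κ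
        = (((c₃ + 1) / deviationConst c₁ κ) ^ (2 - κ⁻¹)⁻¹) ^ (2 - κ⁻¹) :=
          (rpow_inv_rpow (by positivity) hq.ne').symm
      _ ≤ K ^ (2 - κ⁻¹) := by gcongr; exact le_max_right _ _
  refine ⟨K, hK, ?_⟩
  filter_upwards [eventually_ge_atTop N₀, eventually_gt_atTop 0] with n hnN₀ hn Q hQ Ghat hERM
  have hnR : (0 : ℝ) < n := Nat.cast_pos.2 hn
  set t := min (τ n) ((n : ℝ) ^ (1 / (ρ + 2 * κ - 1)))
  have ht : 0 < t := lt_min (hτpos n) (by positivity)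
  obtain ⟨G₀, hG₀, hG₀τ⟩ := happrox n hnN₀ Q hQ
  have hG₀ε : Q.dF G₀ Q.bayes ≤ K * t ^ (-κ) / 2 :=
    calc Q.dF G₀ Q.bayes ≤ c₂ * τ n ^ (-κ) := hG₀τ
      _ ≤ K / 2 * t ^ (-κ) :=
          mul_le_mul (by linarith) (rpow_le_rpow_of_nonpos ht (min_le_left _ _) (by linarith))
            (rpow_nonneg (hτpos n).le _) (by linarith)
      _ = K * t ^ (-κ) / 2 := by ring
  obtain ⟨B, hB, hPB, hoff⟩ := Q.exists_badEvent_of_isERM (hmeas Q hQ n) hc₁ hκ (by positivity)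
    (hnoise Q hQ n) hG₀ hG₀ε hERM
  exact ⟨B, hB, hPB.trans (mul_exp_neg_le_exp_neg_rpow hnR ht hκ hρ (min_le_right _ _)
    (hent n hnN₀) hc₄.le hK.le hKq), hoff⟩

theorem general_convergence_rates_general
    (d : ℕ) (τ : ℕ → ℝ) (hτpos : ∀ n, 0 < τ n)
    (𝔔 : Set (ClsModel d)) (N : ℕ → Finset (Set (Fin d → ℝ)))
    -- (i) measurability
    (hmeas : ∀ _Q ∈ 𝔔, ∀ n, ∀ G ∈ N n, MeasurableSet G)
    -- (ii) the Tsybakov noise condition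
    (κ : ℝ) (hκ : 1 ≤ κ) (c₁ : ℝ) (hc₁ : 0 < c₁)
    (hnoise : ∀ Q ∈ 𝔔, ∀ n, ∀ G ∈ N n,
      c₁ * Q.dDel G Q.bayes ^ κ ≤ Q.dF G Q.bayes)
    (N₀ : ℕ)
    -- (iii) approximation
    (c₂ : ℝ) (hc₂ : 0 < c₂)
    (happrox : ∀ n ≥ N₀, ∀ Q ∈ 𝔔, ∃ G ∈ N n, Q.dF G Q.bayes ≤ c₂ * τ n ^ (-κ))
    -- (iv) entropy bound
    (c₃ ρ : ℝ) (hc₃ : 0 < c₃) (hρ : 0 < ρ)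
    (hent : ∀ n ≥ N₀, Real.log ((N n).card) ≤ c₃ * (n : ℝ) ^ (ρ / (ρ + 2 * κ - 1))) :
    ∀ p : ℝ, 1 ≤ p →
      -- limsup_n sup_Q τ̃_n^{κp} E[d_{f_Q}^p(Ĝ_n, G*_Q)] < ∞
      ((∃ C : ℝ, ∃ N₁ : ℕ, ∀ n ≥ N₁, ∀ Q ∈ 𝔔,
        ∀ Ghat : (Fin n → (Fin d → ℝ) × Bool) → Set (Fin d → ℝ),
          isERM (↑(N n) : Set (Set (Fin d → ℝ))) Ghat →
            min (τ n) ((n : ℝ) ^ (1 / (ρ + 2 * κ - 1))) ^ (κ * p) *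
              clsRisk Q n Ghat ClsModel.dF p ≤ C) ∧
      -- limsup_n sup_Q τ̃_n^{p} E[d_Δ^p(Ĝ_n, G*_Q)] < ∞
      (∃ C : ℝ, ∃ N₁ : ℕ, ∀ n ≥ N₁, ∀ Q ∈ 𝔔,
        ∀ Ghat : (Fin n → (Fin d → ℝ) × Bool) → Set (Fin d → ℝ),
          isERM (↑(N n) : Set (Set (Fin d → ℝ))) Ghat →
            min (τ n) ((n : ℝ) ^ (1 / (ρ + 2 * κ - 1))) ^ p *
              clsRisk Q n Ghat ClsModel.dDel p ≤ C)) := by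
  intro p hp
  have hκ0 : 0 < κ := by linarith
  have hp0 : 0 ≤ p := by linarith
  have hD : 0 < ρ / (ρ + 2 * κ - 1) := div_pos hρ (by linarith)
  obtain ⟨K, hK, hbad⟩ :=
    eventually_exists_badEvent hτpos hmeas hκ hc₁ hnoise hc₂ happrox hc₃ hρ hent
  obtain ⟨N₁, hN₁⟩ := eventually_atTop.1 <| (hbad.and (eventually_gt_atTop 0)).and <|
    (eventually_min_rpow_mul_exp_neg_rpow_le_one hτpos _ (by positivity : 0 ≤ κ * p) hD).and
      (eventually_min_rpow_mul_exp_neg_rpow_le_one hτpos _ (by positivity : 0 ≤ 1 * p) hD)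
  refine ⟨⟨K ^ p + 1, N₁, fun n hn Q hQ Ghat hERM => ?_⟩,
    ⟨((K / c₁) ^ κ⁻¹) ^ p + 1, N₁, fun n hn Q hQ Ghat hERM => ?_⟩⟩
  all_goals
    obtain ⟨⟨hbadn, hn0⟩, htailκ, htail1⟩ := hN₁ n hn
    obtain ⟨B, hB, hPB, hdF⟩ := hbadn Q hQ Ghat hERM
    have ht : 0 < min (τ n) ((n : ℝ) ^ (1 / (ρ + 2 * κ - 1))) :=
      lt_min (hτpos n) (by positivity)
  · exact rpow_mul_integral_rpow_le hB (fun _ => Q.dF_nonneg _ _) (fun _ => Q.dF_le_one _ _) ht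
      hK.le hp0 hdF ((mul_le_mul_of_nonneg_left hPB (rpow_nonneg ht.le _)).trans htailκ)
  · have hdDel ω (hω : ω ∉ B) := le_mul_rpow_neg_one_of_mul_rpow_le hc₁ hκ0
      (Q.dDel_nonneg _ _) hK.le ht ((hnoise Q hQ n _ (hERM ω).1).trans (hdF ω hω))
    simpa only [one_mul, clsRisk] using rpow_mul_integral_rpow_le hB (fun _ => Q.dDel_nonneg _ _)
      (fun _ => Q.dDel_le_one _ _) ht (by positivity) hp0 hdDel
      ((mul_le_mul_of_nonneg_left hPB (rpow_nonneg ht.le _)).trans htail1)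

/-- **Proposition 2.1** (general convergence rates for empirical risk minimizers under the
Tsybakov noise condition). -/
theorem general_convergence_rates
    (d : ℕ) (τ : ℕ → ℝ) (hτpos : ∀ n, 0 < τ n) (hτmono : Monotone τ)
    (𝔔 : Set (ClsModel d)) (N : ℕ → Finset (Set (Fin d → ℝ)))
    -- (i) measurability
    (hmeas : ∀ _Q ∈ 𝔔, ∀ n, ∀ G ∈ N n, MeasurableSet G)
    (hmeasB : ∀ Q ∈ 𝔔, MeasurableSet Q.bayes)
    -- (ii) the Tsybakov noise condition
    (κ : ℝ) (hκ : 1 ≤ κ) (c₁ : ℝ) (hc₁ : 0 < c₁)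
    (hnoise : ∀ Q ∈ 𝔔, ∀ n, ∀ G ∈ N n,
      c₁ * Q.dDel G Q.bayes ^ κ ≤ Q.dF G Q.bayes)
    (N₀ : ℕ)
    -- (iii) approximation
    (c₂ : ℝ) (hc₂ : 0 < c₂)
    (happrox : ∀ n ≥ N₀, ∀ Q ∈ 𝔔, ∃ G ∈ N n, Q.dF G Q.bayes ≤ c₂ * τ n ^ (-κ))
    -- (iv) entropy bound
    (c₃ ρ : ℝ) (hc₃ : 0 < c₃) (hρ : 0 < ρ)
    (hent : ∀ n ≥ N₀, Real.log ((N n).card) ≤ c₃ * (n : ℝ) ^ (ρ / (ρ + 2 * κ - 1))) :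
    ∀ p : ℝ, 1 ≤ p →
      -- limsup_n sup_Q τ̃_n^{κp} E[d_{f_Q}^p(Ĝ_n, G*_Q)] < ∞
      ((∃ C : ℝ, ∃ N₁ : ℕ, ∀ n ≥ N₁, ∀ Q ∈ 𝔔,
        ∀ Ghat : (Fin n → (Fin d → ℝ) × Bool) → Set (Fin d → ℝ),
          isERM (↑(N n) : Set (Set (Fin d → ℝ))) Ghat →
            min (τ n) ((n : ℝ) ^ (1 / (ρ + 2 * κ - 1))) ^ (κ * p) *
              clsRisk Q n Ghat ClsModel.dF p ≤ C) ∧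
      -- limsup_n sup_Q τ̃_n^{p} E[d_Δ^p(Ĝ_n, G*_Q)] < ∞
      (∃ C : ℝ, ∃ N₁ : ℕ, ∀ n ≥ N₁, ∀ Q ∈ 𝔔,
        ∀ Ghat : (Fin n → (Fin d → ℝ) × Bool) → Set (Fin d → ℝ),
          isERM (↑(N n) : Set (Set (Fin d → ℝ))) Ghat →
            min (τ n) ((n : ℝ) ^ (1 / (ρ + 2 * κ - 1))) ^ p *
              clsRisk Q n Ghat ClsModel.dDel p ≤ C)) :=
  general_convergence_rates_general d τ hτpos 𝔔 N hmeas κ hκ c₁ hc₁ hnoise N₀ c₂ hc₂ happrox c₃ ρ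
    hc₃ hρ hent
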